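/- arXiv:2510.16516 — 5 statements merged into one kernel-verified Lean document; each statement's English description precedes it below -/
import Mathlib

section
/- Let X₀ = 0 and let X₁, ..., X_T be independent integrable nonnegative real-valued random variables with means μᵢ = E[Xᵢ], and set μ_{T+1} = 0 and X_{T+1} = 0. Then the quantity OPT = Σ_{i=1}^{T} E[max(Xᵢ - X_{i-1}, 0)] satisfies OPT ≤ 3 · Σ_{i=1}^{T} E[max(μᵢ - X_{i-1}, 0)]. -/
/-!
Write `x⁺ = max x 0`. Pointwise `(Xᵢ - Xᵢ₋₁)⁺ ≤ (Xᵢ - μᵢ)⁺ + (μᵢ - Xᵢ₋₁)⁺`, and since `μᵢ` is the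
mean of `Xᵢ`, `E (Xᵢ - μᵢ)⁺ = E (μᵢ - Xᵢ)⁺ ≤ (μᵢ - μᵢ₊₁) + 2 E (μᵢ₊₁ - Xᵢ)⁺`. Summing over `i`,
the means telescope and each term `E (μᵢ - Xᵢ₋₁)⁺` of the right-hand side is counted at most
three times; the boundary terms vanish because `X₀ = 0` and `X_{T+1} = μ_{T+1} = 0 ≤ X_T`.
-/

open MeasureTheory ProbabilityTheory Finset

lemma max_sub_zero_le_add (a b c : ℝ) : max (a - b) 0 ≤ max (a - c) 0 + max (c - b) 0 := by
  apply max_le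
  · linarith [le_max_left (a - c) 0, le_max_left (c - b) 0]
  · positivity

section Integral

variable {Ω : Type*} [MeasurableSpace Ω] (P : Measure Ω) [IsProbabilityMeasure P]
  {Y Z : Ω → ℝ} {a : ℝ}

lemma integral_max_sub_const_zero (hY : Integrable Y P) (c : ℝ) :
    ∫ ω, max (Y ω - c) 0 ∂P = ∫ ω, max (c - Y ω) 0 ∂P + (∫ ω, Y ω ∂P - c) := by
  have hpt : ∀ ω, max (Y ω - c) 0 = max (c - Y ω) 0 + (Y ω - c) := fun ω => by
    have h := max_zero_sub_max_neg_zero_eq_self (Y ω - c)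
    rw [neg_sub] at h
    linarith
  have hcY : Integrable (fun ω => max (c - Y ω) 0) P := ((integrable_const c).sub hY).pos_part
  have hYc : Integrable (fun ω => Y ω - c) P := hY.sub (integrable_const c)
  simp_rw [hpt]
  rw [integral_add hcY hYc, integral_sub hY (integrable_const c), integral_const, probReal_univ,
    one_smul]

lemma integral_max_const_sub_le (hY : Integrable Y P) (ha : ∫ ω, Y ω ∂P = a) (b : ℝ) :
    ∫ ω, max (a - Y ω) 0 ∂P ≤ (a - b) + 2 * ∫ ω, max (b - Y ω) 0 ∂P := by
  have hbY : Integrable (fun ω => max (b - Y ω) 0) P := ((integrable_const b).sub hY).pos_part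
  have hshift : ∫ ω, max (a - Y ω) 0 ∂P ≤ ∫ ω, max (b - Y ω) 0 ∂P + max (a - b) 0 := by
    calc ∫ ω, max (a - Y ω) 0 ∂P ≤ ∫ ω, (max (b - Y ω) 0 + max (a - b) 0) ∂P :=
          integral_mono ((integrable_const a).sub hY).pos_part (hbY.add (integrable_const _))
            fun ω => by linarith [max_sub_zero_le_add a (Y ω) b]
      _ = _ := by rw [integral_add hbY (integrable_const _), integral_const, probReal_univ,
            one_smul]
  -- Jensen for `x ↦ x⁺`: `b - a = E (b - Y) ≤ E (b - Y)⁺`.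
  have hjensen : b - a ≤ ∫ ω, max (b - Y ω) 0 ∂P := by
    calc b - a = ∫ ω, (b - Y ω) ∂P := by
          rw [integral_sub (integrable_const b) hY, integral_const, probReal_univ, one_smul, ha]
      _ ≤ _ := integral_mono ((integrable_const b).sub hY) hbY fun ω => le_max_left _ _
  have hnonneg : 0 ≤ ∫ ω, max (b - Y ω) 0 ∂P := integral_nonneg fun ω => le_max_right _ _
  have hmax : max (a - b) 0 ≤ (a - b) + ∫ ω, max (b - Y ω) 0 ∂P :=
    max_le (by linarith) (by linarith)
  linarith

lemma integral_max_sub_le (hY : Integrable Y P) (hZ : Integrable Z P) (ha : ∫ ω, Y ω ∂P = a)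
    (b : ℝ) :
    ∫ ω, max (Y ω - Z ω) 0 ∂P ≤
      (a - b) + 2 * ∫ ω, max (b - Y ω) 0 ∂P + ∫ ω, max (a - Z ω) 0 ∂P := by
  have hYa : Integrable (fun ω => max (Y ω - a) 0) P := (hY.sub (integrable_const a)).pos_part
  have haZ : Integrable (fun ω => max (a - Z ω) 0) P := ((integrable_const a).sub hZ).pos_part
  have hsplit : ∫ ω, max (Y ω - Z ω) 0 ∂P ≤
      ∫ ω, max (Y ω - a) 0 ∂P + ∫ ω, max (a - Z ω) 0 ∂P := by
    rw [← integral_add hYa haZ]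
    exact integral_mono (hY.sub hZ).pos_part (hYa.add haZ) fun ω => max_sub_zero_le_add _ _ _
  have hsymm := integral_max_sub_const_zero P hY a
  rw [ha, sub_self, add_zero] at hsymm
  linarith [integral_max_const_sub_le P hY ha b]

end Integral

lemma sum_Icc_sub_add_two_mul_add (m A : ℕ → ℝ) (T : ℕ) :
    ∑ i ∈ Icc 1 T, ((m i - m (i + 1)) + 2 * A (i + 1) + A i) =
      3 * ∑ i ∈ Icc 1 T, A i + (m 1 - m (T + 1)) + 2 * (A (T + 1) - A 1) := by
  induction T with
  | zero => simp
  | succ T ih =>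
    rw [sum_Icc_succ_top (by omega), sum_Icc_succ_top (by omega), ih]
    ring

theorem opt_le_three_alg_general {Ω : Type*} [MeasureSpace Ω]
    [IsProbabilityMeasure (ℙ : Measure Ω)]
    (T : ℕ) (X : ℕ → Ω → ℝ) (μ : ℕ → ℝ)
    (hX0 : ∀ ω, X 0 ω = 0) (hXT1 : ∀ ω, X (T + 1) ω = 0)
    (hint : ∀ i, Integrable (X i))
    (hnonneg : ∀ i ω, 0 ≤ X i ω)
    (hμ : ∀ i, μ i = ∫ ω, X i ω) :
    ∑ i ∈ Icc 1 T, ∫ ω, max (X i ω - X (i - 1) ω) 0 ≤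
      3 * ∑ i ∈ Icc 1 T, ∫ ω, max (μ i - X (i - 1) ω) 0 := by
  set A : ℕ → ℝ := fun i => ∫ ω, max (μ i - X (i - 1) ω) 0 with hA
  have hμ_last : μ (T + 1) = 0 := by simp [hμ, hXT1]
  have hA_last : A (T + 1) = 0 := by
    simp [hA, hμ_last, fun ω => max_eq_right (neg_nonpos.mpr (hnonneg T ω))]
  have hA_first : A 1 = max (μ 1) 0 := by simp [hA, hX0]
  have hstep : ∀ i ∈ Icc 1 T, ∫ ω, max (X i ω - X (i - 1) ω) 0 ≤
      (μ i - μ (i + 1)) + 2 * A (i + 1) + A i := fun i _ => by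
    simpa [hA] using
      integral_max_sub_le ℙ (hint i) (hint (i - 1)) (hμ i).symm (μ (i + 1))
  calc _ ≤ ∑ i ∈ Icc 1 T, ((μ i - μ (i + 1)) + 2 * A (i + 1) + A i) := sum_le_sum hstep
    _ = 3 * ∑ i ∈ Icc 1 T, A i + (μ 1 - μ (T + 1)) + 2 * (A (T + 1) - A 1) :=
      sum_Icc_sub_add_two_mul_add μ A T
    _ ≤ 3 * ∑ i ∈ Icc 1 T, A i := by
      rw [hμ_last, hA_last, hA_first]
      linarith [le_max_left (μ 1) 0, le_max_right (μ 1) 0]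

theorem opt_le_three_alg {Ω : Type*} [MeasureSpace Ω]
    [IsProbabilityMeasure (ℙ : Measure Ω)]
    (T : ℕ) (X : ℕ → Ω → ℝ) (μ : ℕ → ℝ)
    (hX0 : ∀ ω, X 0 ω = 0) (hXT1 : ∀ ω, X (T + 1) ω = 0)
    (hmeas : ∀ i, Measurable (X i))
    (hint : ∀ i, Integrable (X i))
    (hnonneg : ∀ i ω, 0 ≤ X i ω)
    (hindep : ProbabilityTheory.iIndepFun X ℙ)
    (hμ : ∀ i, μ i = ∫ ω, X i ω) :
    ∑ i ∈ Icc 1 T, ∫ ω, max (X i ω - X (i - 1) ω) 0 ≤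
      3 * ∑ i ∈ Icc 1 T, ∫ ω, max (μ i - X (i - 1) ω) 0 :=
  opt_le_three_alg_general T X μ hX0 hXT1 hint hnonneg hμ
end

section
/- Let X₀ = 0 and let X₁, ..., X_T be independent integrable nonnegative real-valued random variables each with the same mean μ, and set X_{T+1} = 0. Then Σ_{i=1}^{T} E[max(Xᵢ - X_{i-1}, 0)] ≤ 2 · Σ_{i=1}^{T} E[max(μ - X_{i-1}, 0)], where in the sum on the right the term for i = 1 is E[max(μ - X₀, 0)] = μ. -/
open MeasureTheory ProbabilityTheory Finset

theorem opt_le_two_alg_iid_mean {Ω : Type*} [MeasureSpace Ω]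
    [IsProbabilityMeasure (ℙ : Measure Ω)]
    (T : ℕ) (X : ℕ → Ω → ℝ) (μ : ℝ)
    (hX0 : ∀ ω, X 0 ω = 0) (hXT1 : ∀ ω, X (T + 1) ω = 0)
    (hmeas : ∀ i, Measurable (X i))
    (hint : ∀ i, Integrable (X i))
    (hnonneg : ∀ i ω, 0 ≤ X i ω)
    (hindep : ProbabilityTheory.iIndepFun X ℙ)
    (hμ : ∀ i ∈ Icc 1 T, ∫ ω, X i ω = μ) :
    ∑ i ∈ Icc 1 T, ∫ ω, max (X i ω - X (i - 1) ω) 0 ≤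
      2 * ∑ i ∈ Icc 1 T, ∫ ω, max (μ - X (i - 1) ω) 0 := by
  rcases Nat.eq_zero_or_pos T with hT | hT
  · subst hT; simp
  have h1T : (1 : ℕ) ∈ Icc 1 T := Finset.mem_Icc.mpr ⟨le_refl 1, hT⟩
  have hμ0 : 0 ≤ μ := by
    rw [← hμ 1 h1T]; exact integral_nonneg (hnonneg 1)
  set f : ℕ → ℝ := fun j => ∫ ω, max (μ - X j ω) 0 with hf
  have hintf : ∀ j, Integrable (fun ω => max (μ - X j ω) 0) := fun j =>
    ((integrable_const μ).sub (hint j)).pos_part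
  have hintg : ∀ j, Integrable (fun ω => max (X j ω - μ) 0) := fun j =>
    ((hint j).sub (integrable_const μ)).pos_part
  have key : ∀ i ∈ Icc 1 T,
      (∫ ω, max (X i ω - X (i - 1) ω) 0) ≤ f i + f (i - 1) := by
    intro i hi
    have step1 : (∫ ω, max (X i ω - X (i - 1) ω) 0) ≤
        ∫ ω, (max (X i ω - μ) 0 + max (μ - X (i - 1) ω) 0) := by
      refine integral_mono ((hint i).sub (hint (i - 1))).pos_part
        ((hintg i).add (hintf (i - 1))) (fun ω => ?_)
      refine max_le ?_ (by positivity)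
      have h1 : X i ω - μ ≤ max (X i ω - μ) 0 := le_max_left _ _
      have h2 : μ - X (i - 1) ω ≤ max (μ - X (i - 1) ω) 0 := le_max_left _ _
      linarith
    have step2 : (∫ ω, max (X i ω - μ) 0) = f i := by
      have hpt : ∀ ω, max (X i ω - μ) 0 = (X i ω - μ) + max (μ - X i ω) 0 := by
        intro ω
        rcases le_total (X i ω) μ with h | h
        · rw [max_eq_right (by linarith), max_eq_left (by linarith)]; ring
        · rw [max_eq_left (by linarith), max_eq_right (by linarith)]; ring
      calc (∫ ω, max (X i ω - μ) 0)
          = ∫ ω, ((X i ω - μ) + max (μ - X i ω) 0) := by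
            exact integral_congr_ae (Filter.Eventually.of_forall hpt)
        _ = (∫ ω, (X i ω - μ)) + f i :=
            integral_add ((hint i).sub (integrable_const μ)) (hintf i)
        _ = f i := by
            rw [integral_sub (hint i) (integrable_const μ), integral_const]
            simp [hμ i hi]
    have hsplit : (∫ ω, (max (X i ω - μ) 0 + max (μ - X (i - 1) ω) 0)) =
        (∫ ω, max (X i ω - μ) 0) + f (i - 1) :=
      integral_add (hintg i) (hintf (i - 1))
    rw [hsplit, step2] at step1
    exact step1
  have hsum : ∑ i ∈ Icc 1 T, ∫ ω, max (X i ω - X (i - 1) ω) 0 ≤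
      ∑ i ∈ Icc 1 T, (f i + f (i - 1)) := Finset.sum_le_sum key
  have htele : ∑ i ∈ Icc 1 T, (f (i - 1) - f i) = f 0 - f T := by
    rw [← Finset.Ico_add_one_right_eq_Icc, Finset.sum_Ico_eq_sum_range]
    have h1 : ∀ i, f (1 + i - 1) - f (1 + i) = f i - f (i + 1) := by
      intro i; congr 2 <;> omega
    simp only [h1]
    have h2 : T + 1 - 1 = T := by omega
    rw [h2, Finset.sum_range_sub' f T]
  have hf0 : f 0 = μ := by
    simp only [hf]
    have : ∀ ω, max (μ - X 0 ω) 0 = μ := by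
      intro ω; rw [hX0, sub_zero, max_eq_left hμ0]
    simp only [this, integral_const, measure_univ, probReal_univ, ENNReal.toReal_one, smul_eq_mul, one_mul]
  have hfT : f T ≤ μ := by
    calc f T ≤ ∫ _ω, μ := by
          refine integral_mono (hintf T) (integrable_const μ) (fun ω => ?_)
          refine max_le ?_ hμ0
          linarith [hnonneg T ω]
      _ = μ := by simp
  have hshift : ∑ i ∈ Icc 1 T, f i ≤ ∑ i ∈ Icc 1 T, f (i - 1) := by
    have := htele
    rw [Finset.sum_sub_distrib] at this
    linarith
  rw [Finset.sum_add_distrib] at hsum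
  linarith
end

section
/- Let 0 < ε < 1 and let X be a random variable taking value 1/ε with probability 1-ε and value 0 with probability ε, and let Y be an independent random variable taking value 1/ε - 1 with probability 1-ε and value 2/ε - 1 with probability ε. Then E[max(Y - X, 0)] = 2(1-ε)² + ε(2-ε), and in particular E[max(Y - X, 0)] ≥ 2 - 4ε. -/
/-!
Both variables are almost surely supported on two points, so by independence the expectation of
`(Y - X)⁺` is a finite sum over the four atoms of `(X, Y)`, weighted by products of the marginal
masses. Only the atom `(1/ε, 1/ε - 1)` contributes nothing; the other three contribute
`ε(1-ε)(1/ε - 1)` twice and `ε²(2/ε - 1)`.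
-/

open MeasureTheory ProbabilityTheory

section

variable {Ω α : Type*} [MeasurableSpace Ω] [MeasurableSpace α] [MeasurableSingletonClass α]
  {μ : Measure Ω} {Z : Ω → α}

theorem ae_mem_of_sum_measure_eq_one [IsProbabilityMeasure μ] (hZ : Measurable Z) {s : Finset α}
    (hs : ∑ x ∈ s, μ {ω | Z ω = x} = 1) : ∀ᵐ ω ∂μ, Z ω ∈ s := by
  refine (ae_mem_iff_measure_eq (hZ s.measurableSet).nullMeasurableSet).2 ?_
  rwa [measure_univ,
    ← sum_measure_preimage_singleton s fun x _ ↦ hZ (measurableSet_singleton x)]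

theorem integral_comp_eq_sum_of_ae_mem {E : Type*} [NormedAddCommGroup E] [NormedSpace ℝ E]
    [CompleteSpace E] [IsFiniteMeasure μ] (hZ : Measurable Z) {g : α → E}
    (hg : StronglyMeasurable g) {s : Finset α} (hs : ∀ᵐ ω ∂μ, Z ω ∈ s) :
    ∫ ω, g (Z ω) ∂μ = ∑ x ∈ s, μ.real {ω | Z ω = x} • g x := by
  have hs' : ∀ᵐ x ∂μ.map Z, x ∈ (s : Set α) :=
    (ae_map_iff hZ.aemeasurable s.measurableSet).2 hs
  rw [← integral_map hZ.aemeasurable hg.aestronglyMeasurable,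
    ← Measure.restrict_eq_self_of_ae_mem hs', setIntegral_finset s IntegrableOn.finset]
  refine Finset.sum_congr rfl fun x _ ↦ ?_
  rw [map_measureReal_apply hZ (measurableSet_singleton x)]
  rfl

theorem integral_comp_eq_sum_of_indepFun {β E : Type*} [MeasurableSpace β]
    [MeasurableSingletonClass β] [NormedAddCommGroup E] [NormedSpace ℝ E] [CompleteSpace E]
    [IsFiniteMeasure μ] {X : Ω → α} {Y : Ω → β} (hX : Measurable X)
    (hY : Measurable Y) (hXY : IndepFun X Y μ) {g : α → β → E}
    (hg : StronglyMeasurable (Function.uncurry g)) {s : Finset α} {t : Finset β}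
    (hs : ∀ᵐ ω ∂μ, X ω ∈ s) (ht : ∀ᵐ ω ∂μ, Y ω ∈ t) :
    ∫ ω, g (X ω) (Y ω) ∂μ =
      ∑ x ∈ s, ∑ y ∈ t, (μ.real {ω | X ω = x} * μ.real {ω | Y ω = y}) • g x y := by
  have hst : ∀ᵐ ω ∂μ, (X ω, Y ω) ∈ s ×ˢ t := by
    filter_upwards [hs, ht] with ω hω₁ hω₂ using Finset.mem_product.2 ⟨hω₁, hω₂⟩
  refine (integral_comp_eq_sum_of_ae_mem (hX.prodMk hY) hg hst).trans ?_
  rw [Finset.sum_product]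
  refine Finset.sum_congr rfl fun x _ ↦ Finset.sum_congr rfl fun y _ ↦ ?_
  have hfiber : {ω | (X ω, Y ω) = (x, y)} = X ⁻¹' {x} ∩ Y ⁻¹' {y} := by ext; simp
  rw [hfiber, measureReal_def, hXY.measure_inter_preimage_eq_mul _ _ (measurableSet_singleton x)
    (measurableSet_singleton y), ENNReal.toReal_mul]
  rfl

end

theorem lower_bound_even_step {Ω : Type*} [MeasureSpace Ω]
    [IsProbabilityMeasure (ℙ : Measure Ω)]
    (ε : ℝ) (hε0 : 0 < ε) (hε1 : ε < 1) (X Y : Ω → ℝ)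
    (hmX : Measurable X) (hmY : Measurable Y)
    (hX1 : ℙ {ω | X ω = 1 / ε} = ENNReal.ofReal (1 - ε))
    (hX0 : ℙ {ω | X ω = 0} = ENNReal.ofReal ε)
    (hY1 : ℙ {ω | Y ω = 1 / ε - 1} = ENNReal.ofReal (1 - ε))
    (hY2 : ℙ {ω | Y ω = 2 / ε - 1} = ENNReal.ofReal ε)
    (hindep : IndepFun X Y) :
    (∫ ω, max (Y ω - X ω) 0) = 2 * (1 - ε) ^ 2 + ε * (2 - ε) ∧
      2 - 4 * ε ≤ ∫ ω, max (Y ω - X ω) 0 := by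
  have hmass : ENNReal.ofReal (1 - ε) + ENNReal.ofReal ε = 1 := by
    rw [← ENNReal.ofReal_add (by linarith) hε0.le]; simp
  have hXne : 1 / ε ≠ 0 := by positivity
  have hYne : 1 / ε - 1 ≠ 2 / ε - 1 := by
    rw [ne_eq, sub_left_inj, div_left_inj' hε0.ne']; norm_num
  have hXsupp : ∀ᵐ ω, X ω ∈ ({1 / ε, 0} : Finset ℝ) :=
    ae_mem_of_sum_measure_eq_one hmX (by rw [Finset.sum_pair hXne, hX1, hX0, hmass])
  have hYsupp : ∀ᵐ ω, Y ω ∈ ({1 / ε - 1, 2 / ε - 1} : Finset ℝ) :=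
    ae_mem_of_sum_measure_eq_one hmY (by rw [Finset.sum_pair hYne, hY1, hY2, hmass])
  have hint : (∫ ω, max (Y ω - X ω) 0) = 2 * (1 - ε) ^ 2 + ε * (2 - ε) := by
    rw [integral_comp_eq_sum_of_indepFun (g := fun x y ↦ max (y - x) 0) hmX hmY hindep
      (by fun_prop) hXsupp hYsupp]
    have hinv : 1 ≤ 1 / ε := by rw [le_div_iff₀ hε0]; linarith
    have htwo : 2 / ε = 2 * (1 / ε) := by ring
    simp only [Finset.sum_pair hXne, Finset.sum_pair hYne, measureReal_def, hX1, hX0, hY1, hY2,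
      ENNReal.toReal_ofReal hε0.le, ENNReal.toReal_ofReal (sub_nonneg.2 hε1.le), smul_eq_mul,
      sub_zero]
    rw [max_eq_right (by linarith), max_eq_left (by linarith), max_eq_left (by linarith),
      max_eq_left (by linarith)]
    field_simp
    ring
  exact ⟨hint, by rw [hint]; nlinarith⟩
end

section
/- Under the same setup (i.i.d. prices, thresholds z_L ≤ z_H with p = P(X ≤ z_L) = P(X ≥ z_H), v_L = E[X | X ≤ z_L], v_H = E[X | X ≥ z_H]), the Buy-Below-Sell-Above algorithm — which sells when holding the stock and Xᵢ ≥ z_H, and buys when not holding and Xᵢ ≤ z_L, starting with one unit of stock — has expected profit at least (pT/2)·(v_H(1-επ) - v_L(1+επ) - 2εσ). -/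
/-!
Let `q k` be the probability that the algorithm holds the stock after round `k`. The holding
state is a function of the first `k` prices, hence independent of the price of round `k + 1`, so
that round contributes `q k * a - (1 - q k) * b` to the expected profit, where `a` and `b` are
the expected proceeds of a sale and cost of a purchase. Sales and purchases alternate, starting
with a sale, so there are never fewer sales than purchases; taking expectations,
`p * ∑ k, (2 * q k - 1) ≥ 0`: on average the algorithm holds at least half of the time, which
is where `T / 2` comes from.
-/

open MeasureTheory ProbabilityTheory Finset

/-- Holding state of the Buy-Below-Sell-Above algorithm: `holdBBSA zL zH x i` is
`true` iff the algorithm holds the stock after observing the price `x i`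
(the algorithm starts holding one unit; it sells when holding and `x i ≥ zH`,
and buys when not holding and `x i ≤ zL`). -/
noncomputable def holdBBSA (zL zH : ℝ) (x : ℕ → ℝ) : ℕ → Bool
  | 0 => true
  | i + 1 =>
      if holdBBSA zL zH x i then decide (x (i + 1) < zH) else decide (x (i + 1) ≤ zL)

theorem Finset.sum_Icc_one_eq_sum_range {M : Type*} [AddCommMonoid M] (f : ℕ → M) (n : ℕ) :
    ∑ i ∈ Icc 1 n, f i = ∑ k ∈ range n, f (k + 1) := by
  rw [range_eq_Ico, sum_Ico_add' f 0 n 1, zero_add, Ico_add_one_right_eq_Icc]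

theorem MeasureTheory.setIntegral_comp_preimage_eq_of_map_eq {Ω α E : Type*}
    [MeasurableSpace Ω] [MeasurableSpace α] [NormedAddCommGroup E] [NormedSpace ℝ E]
    {μ : Measure Ω} {Y Z : Ω → α}
    (hY : Measurable Y) (hZ : Measurable Z) (h : μ.map Y = μ.map Z) {s : Set α}
    (hs : MeasurableSet s) {g : α → E} (hg : AEStronglyMeasurable g (μ.map Y)) :
    ∫ ω in Y ⁻¹' s, g (Y ω) ∂μ = ∫ ω in Z ⁻¹' s, g (Z ω) ∂μ := by
  rw [← setIntegral_map hs hg hY.aemeasurable, h, setIntegral_map hs (h ▸ hg) hZ.aemeasurable]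

theorem ProbabilityTheory.IndepFun.integral_indicator_preimage_inter {Ω β γ : Type*}
    [MeasurableSpace Ω] [MeasurableSpace β] [MeasurableSpace γ] {μ : Measure Ω} {Y : Ω → β}
    {Z : Ω → γ} (h : IndepFun Y Z μ) (hY : Measurable Y) (hZ : Measurable Z) {t : Set β}
    {s : Set γ} (ht : MeasurableSet t) (hs : MeasurableSet s) {g : γ → ℝ} (hg : Measurable g) :
    ∫ ω, (Y ⁻¹' t ∩ Z ⁻¹' s).indicator (fun ω => g (Z ω)) ω ∂μ =
      μ.real (Y ⁻¹' t) * ∫ ω in Z ⁻¹' s, g (Z ω) ∂μ := by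
  have hφ : Measurable (t.indicator (1 : β → ℝ)) := measurable_one.indicator ht
  calc _ = ∫ ω, (t.indicator 1 ∘ Y) ω * (s.indicator g ∘ Z) ω ∂μ := by
        congr 1 with ω
        by_cases hYt : Y ω ∈ t <;> by_cases hZs : Z ω ∈ s <;>
          simp [hYt, hZs]
    _ = _ := (h.comp hφ (hg.indicator hs)).integral_fun_mul_eq_mul_integral
        (hφ.comp hY).aestronglyMeasurable ((hg.indicator hs).comp hZ).aestronglyMeasurable
    _ = _ := by rw [← integral_indicator_one (hY ht), ← integral_indicator (hZ hs)]; rfl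

theorem le_sum_mul_sub_one_sub_mul {T : ℕ} {q : ℕ → ℝ} {a b : ℝ}
    (hq : 0 ≤ ∑ k ∈ range T, (2 * q k - 1)) (hab : 0 ≤ a + b) :
    T / 2 * (a - b) ≤ ∑ k ∈ range T, (q k * a - (1 - q k) * b) := by
  have hsplit : ∑ k ∈ range T, (q k * a - (1 - q k) * b) =
      T / 2 * (a - b) + (∑ k ∈ range T, (2 * q k - 1)) * (a + b) / 2 := by
    simp only [sum_sub_distrib, ← sum_mul, ← mul_sum, sum_const, card_range, nsmul_eq_mul]
    ring
  rw [hsplit]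
  linarith [mul_nonneg hq hab]

section Algorithm

variable {zL zH : ℝ}

theorem holdBBSA_congr {x y : ℕ → ℝ} {i : ℕ} (h : ∀ j ∈ Icc 1 i, x j = y j) :
    holdBBSA zL zH x i = holdBBSA zL zH y i := by
  induction i with
  | zero => rfl
  | succ k ih =>
    simp only [holdBBSA, ih fun j hj => h j (Icc_subset_Icc_right k.le_succ hj),
      h (k + 1) (right_mem_Icc.2 (Nat.le_add_left 1 k))]

theorem measurable_holdBBSA {α : Type*} [MeasurableSpace α] {u : ℕ → α → ℝ}
    (hu : ∀ j, Measurable (u j)) (i : ℕ) : Measurable fun a => holdBBSA zL zH (u · a) i := by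
  induction i with
  | zero => exact measurable_const
  | succ k ih =>
    refine Measurable.ite (ih (measurableSet_singleton true)) (measurable_to_bool ?_)
      (measurable_to_bool ?_)
    · simpa [Set.preimage] using measurableSet_lt (hu (k + 1)) measurable_const
    · simpa [Set.preimage] using measurableSet_le (hu (k + 1)) measurable_const

theorem indepFun_holdBBSA {Ω : Type*} [MeasurableSpace Ω] {μ : Measure Ω} {X : ℕ → Ω → ℝ}
    (hmeas : ∀ j, Measurable (X j)) (hindep : iIndepFun X μ) (k : ℕ) :
    IndepFun (fun ω => holdBBSA zL zH (X · ω) k) (X (k + 1)) μ := by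
  let φ : (Icc 1 k → ℝ) → Bool := fun y =>
    holdBBSA zL zH (fun j => if h : j ∈ Icc 1 k then y ⟨j, h⟩ else 0) k
  have hφ : Measurable φ := measurable_holdBBSA (fun j => by
    by_cases h : j ∈ Icc 1 k <;> simp [h, measurable_pi_apply]) k
  have hdisj : Disjoint (Icc 1 k) {k + 1} := by simp
  convert (hindep.indepFun_finset _ _ hdisj hmeas).comp hφ
    (measurable_pi_apply ⟨k + 1, mem_singleton_self _⟩) using 1
  · funext ω
    exact holdBBSA_congr fun j hj => by simp [hj]
  · rfl

/-- With `fS = fB = 1` this is the number of sales minus the number of purchases in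
round `i`. -/
noncomputable def cashFlowBBSA {Ω : Type*} (zL zH : ℝ) (fS fB : ℝ → ℝ) (X : ℕ → Ω → ℝ)
    (i : ℕ) (ω : Ω) : ℝ :=
  {ω' | holdBBSA zL zH (X · ω') (i - 1) = true ∧ zH ≤ X i ω'}.indicator
      (fun ω' => fS (X i ω')) ω -
    {ω' | holdBBSA zL zH (X · ω') (i - 1) = false ∧ X i ω' ≤ zL}.indicator
      (fun ω' => fB (X i ω')) ω

theorem cashFlowBBSA_one_succ {Ω : Type*} (X : ℕ → Ω → ℝ) (ω : Ω) (k : ℕ) :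
    cashFlowBBSA zL zH 1 1 X (k + 1) ω =
      (if holdBBSA zL zH (X · ω) k then 1 else 0) -
        (if holdBBSA zL zH (X · ω) (k + 1) then 1 else 0) := by
  simp only [cashFlowBBSA, holdBBSA, Set.indicator_apply, Set.mem_ofPred_eq,
    Nat.add_sub_cancel, Pi.one_apply]
  by_cases hk : holdBBSA zL zH (X · ω) k = true
  · by_cases h : zH ≤ X (k + 1) ω
    · simp [hk, h, not_lt.2 h]
    · simp [hk, h, lt_of_not_ge h]
  · by_cases h : X (k + 1) ω ≤ zL <;> simp [hk, h]

theorem sum_cashFlowBBSA_one_nonneg {Ω : Type*} (X : ℕ → Ω → ℝ) (ω : Ω) (T : ℕ) :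
    0 ≤ ∑ i ∈ Icc 1 T, cashFlowBBSA zL zH 1 1 X i ω := by
  rw [sum_Icc_one_eq_sum_range]
  simp only [cashFlowBBSA_one_succ]
  have h0 : holdBBSA zL zH (X · ω) 0 = true := rfl
  rw [sum_range_sub' (fun k => if holdBBSA zL zH (X · ω) k then (1 : ℝ) else 0), if_pos h0]
  split_ifs <;> norm_num

end Algorithm

section Probability

variable {Ω : Type*} [MeasurableSpace Ω] {μ : Measure Ω} {X : ℕ → Ω → ℝ} {zL zH : ℝ}
  {fS fB : ℝ → ℝ}

theorem integrable_cashFlowBBSA (hmeas : ∀ j, Measurable (X j)) {i : ℕ}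
    (hS : Integrable (fun ω => fS (X i ω)) μ) (hB : Integrable (fun ω => fB (X i ω)) μ) :
    Integrable (cashFlowBBSA zL zH fS fB X i) μ :=
  (hS.indicator ((measurable_holdBBSA hmeas _ (measurableSet_singleton true)).inter
      (measurableSet_le measurable_const (hmeas i)))).sub
    (hB.indicator ((measurable_holdBBSA hmeas _ (measurableSet_singleton false)).inter
      (measurableSet_le (hmeas i) measurable_const)))

theorem integral_cashFlowBBSA_succ [IsProbabilityMeasure μ] (hmeas : ∀ j, Measurable (X j))
    (hindep : iIndepFun X μ) {Y : Ω → ℝ} (hY : Measurable Y) {k : ℕ}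
    (hident : μ.map (X (k + 1)) = μ.map Y) (hfS : Measurable fS) (hfB : Measurable fB)
    (hS : Integrable (fun ω => fS (X (k + 1) ω)) μ)
    (hB : Integrable (fun ω => fB (X (k + 1) ω)) μ) :
    ∫ ω, cashFlowBBSA zL zH fS fB X (k + 1) ω ∂μ =
      μ.real {ω | holdBBSA zL zH (X · ω) k = true} * ∫ ω in {ω | zH ≤ Y ω}, fS (Y ω) ∂μ -
        (1 - μ.real {ω | holdBBSA zL zH (X · ω) k = true}) *
          ∫ ω in {ω | Y ω ≤ zL}, fB (Y ω) ∂μ := by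
  have hH := measurable_holdBBSA (zL := zL) (zH := zH) hmeas k
  have hind := indepFun_holdBBSA (zL := zL) (zH := zH) hmeas hindep k
  have hsell := hind.integral_indicator_preimage_inter hH (hmeas _)
    (measurableSet_singleton true) (measurableSet_Ici (a := zH)) hfS
  have hbuy := hind.integral_indicator_preimage_inter hH (hmeas _)
    (measurableSet_singleton false) (measurableSet_Iic (a := zL)) hfB
  have hfalse : μ.real ((fun ω => holdBBSA zL zH (X · ω) k) ⁻¹' {false}) =
      1 - μ.real ((fun ω => holdBBSA zL zH (X · ω) k) ⁻¹' {true}) := by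
    rw [← probReal_compl_eq_one_sub (hH (measurableSet_singleton true))]
    congr 1 with ω
    simp
  rw [setIntegral_comp_preimage_eq_of_map_eq (hmeas _) hY hident measurableSet_Ici
    hfS.aestronglyMeasurable] at hsell
  rw [setIntegral_comp_preimage_eq_of_map_eq (hmeas _) hY hident measurableSet_Iic
    hfB.aestronglyMeasurable, hfalse] at hbuy
  have hsetS := (hH (measurableSet_singleton true)).inter
    ((measurableSet_Ici (a := zH)).preimage (hmeas (k + 1)))
  have hsetB := (hH (measurableSet_singleton false)).inter
    ((measurableSet_Iic (a := zL)).preimage (hmeas (k + 1)))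
  exact (integral_sub (hS.indicator hsetS) (hB.indicator hsetB)).trans
    (congrArg₂ (· - ·) hsell hbuy)

theorem integral_sum_cashFlowBBSA [IsProbabilityMeasure μ] (hmeas : ∀ j, Measurable (X j))
    (hindep : iIndepFun X μ) {Y : Ω → ℝ} (hY : Measurable Y) {T : ℕ}
    (hident : ∀ i ∈ Icc 1 T, μ.map (X i) = μ.map Y) (hfS : Measurable fS) (hfB : Measurable fB)
    (hS : ∀ i, Integrable (fun ω => fS (X i ω)) μ)
    (hB : ∀ i, Integrable (fun ω => fB (X i ω)) μ) :
    ∫ ω, ∑ i ∈ Icc 1 T, cashFlowBBSA zL zH fS fB X i ω ∂μ =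
      ∑ k ∈ range T,
        (μ.real {ω | holdBBSA zL zH (X · ω) k = true} * ∫ ω in {ω | zH ≤ Y ω}, fS (Y ω) ∂μ -
          (1 - μ.real {ω | holdBBSA zL zH (X · ω) k = true}) *
            ∫ ω in {ω | Y ω ≤ zL}, fB (Y ω) ∂μ) := by
  rw [integral_finsetSum _ fun i _ => integrable_cashFlowBBSA hmeas (hS i) (hB i),
    sum_Icc_one_eq_sum_range]
  exact sum_congr rfl fun k hk => integral_cashFlowBBSA_succ hmeas hindep hY
    (hident (k + 1) (mem_Icc.2 ⟨Nat.le_add_left 1 k, mem_range.1 hk⟩)) hfS hfB (hS _) (hB _)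

theorem sum_probReal_sell_sub_buy_nonneg [IsProbabilityMeasure μ]
    (hmeas : ∀ j, Measurable (X j)) (hindep : iIndepFun X μ) {Y : Ω → ℝ} (hY : Measurable Y) {T : ℕ}
    (hident : ∀ i ∈ Icc 1 T, μ.map (X i) = μ.map Y) :
    0 ≤ ∑ k ∈ range T, (μ.real {ω | holdBBSA zL zH (X · ω) k = true} * μ.real {ω | zH ≤ Y ω} -
      (1 - μ.real {ω | holdBBSA zL zH (X · ω) k = true}) * μ.real {ω | Y ω ≤ zL}) := by
  calc 0 ≤ ∫ ω, ∑ i ∈ Icc 1 T, cashFlowBBSA zL zH 1 1 X i ω ∂μ :=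
        integral_nonneg fun ω => sum_cashFlowBBSA_one_nonneg X ω T
    _ = _ := by
        rw [integral_sum_cashFlowBBSA hmeas hindep hY hident measurable_one measurable_one
          (fun _ => integrable_const 1) (fun _ => integrable_const 1)]
        simp

end Probability

theorem alg_lower_bound_transaction_costs_general {Ω : Type*} [MeasureSpace Ω]
    [IsProbabilityMeasure (ℙ : Measure Ω)]
    (T : ℕ) (X : ℕ → Ω → ℝ)
    (hmeas : ∀ i, Measurable (X i))
    (hint : ∀ i, Integrable (X i))
    (hnonneg : ∀ i ω, 0 ≤ X i ω)
    (hindep : iIndepFun X ℙ)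
    (hident : ∀ i ∈ Icc 1 T, Measure.map (X i) ℙ = Measure.map (X 1) ℙ)
    (επ εσ : ℝ) (hπ0 : 0 ≤ επ) (hπ1 : επ < 1)
    (zL zH p vL vH : ℝ)
    (hpL : p = (ℙ {ω | X 1 ω ≤ zL}).toReal)
    (hpH : p = (ℙ {ω | zH ≤ X 1 ω}).toReal)
    (hvLdef : p * vL = ∫ ω in {ω | X 1 ω ≤ zL}, X 1 ω)
    (hvHdef : p * vH = ∫ ω in {ω | zH ≤ X 1 ω}, X 1 ω) :
    p * T / 2 * (vH * (1 - επ) - vL * (1 + επ) - 2 * εσ) ≤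
      ∫ ω, ∑ i ∈ Icc 1 T,
        (({ω' : Ω | holdBBSA zL zH (fun j => X j ω') (i - 1) = true ∧ zH ≤ X i ω'}.indicator
            (fun ω' => (1 - επ) * X i ω' - εσ) ω) -
          {ω' : Ω | holdBBSA zL zH (fun j => X j ω') (i - 1) = false ∧ X i ω' ≤ zL}.indicator
            (fun ω' => (1 + επ) * X i ω' + εσ) ω) := by
  set q : ℕ → ℝ := fun k => (ℙ : Measure Ω).real {ω | holdBBSA zL zH (X · ω) k = true}
  set a := (1 - επ) * (p * vH) - εσ * p
  set b := (1 + επ) * (p * vL) + εσ * p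
  have hsell : ∫ ω in {ω | zH ≤ X 1 ω}, (1 - επ) * X 1 ω - εσ = a := by
    rw [integral_sub ((hint 1).const_mul _).integrableOn (integrable_const _).integrableOn,
      integral_const_mul, ← hvHdef, setIntegral_const, smul_eq_mul, measureReal_def, ← hpH]
    ring
  have hbuy : ∫ ω in {ω | X 1 ω ≤ zL}, (1 + επ) * X 1 ω + εσ = b := by
    rw [integral_add ((hint 1).const_mul _).integrableOn (integrable_const _).integrableOn,
      integral_const_mul, ← hvLdef, setIntegral_const, smul_eq_mul, measureReal_def, ← hpL]
    ring
  have hprofit : ∫ ω, ∑ i ∈ Icc 1 T, cashFlowBBSA zL zH (fun x => (1 - επ) * x - εσ)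
      (fun x => (1 + επ) * x + εσ) X i ω = ∑ k ∈ range T, (q k * a - (1 - q k) * b) := by
    rw [integral_sum_cashFlowBBSA hmeas hindep (hmeas 1) hident (by fun_prop) (by fun_prop)
      (fun i => ((hint i).const_mul _).sub (integrable_const _))
      (fun i => ((hint i).const_mul _).add (integrable_const _)), hsell, hbuy]
  have hvH : 0 ≤ p * vH := hvHdef ▸
    setIntegral_nonneg (measurableSet_le measurable_const (hmeas 1)) fun ω _ => hnonneg 1 ω
  have hvL : 0 ≤ p * vL := hvLdef ▸
    setIntegral_nonneg (measurableSet_le (hmeas 1) measurable_const) fun ω _ => hnonneg 1 ω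
  refine le_of_le_of_eq ?_ hprofit.symm
  obtain rfl | hp := (hpH ▸ ENNReal.toReal_nonneg : 0 ≤ p).eq_or_lt
  · simp [a, b]
  have hD : 0 ≤ ∑ k ∈ range T, (2 * q k - 1) := by
    have h := sum_probReal_sell_sub_buy_nonneg (zL := zL) (zH := zH) hmeas hindep (hmeas 1)
      hident
    rw [measureReal_def, measureReal_def, ← hpL, ← hpH] at h
    refine nonneg_of_mul_nonneg_left (h.trans_eq ?_) hp
    rw [sum_mul]
    exact sum_congr rfl fun k _ => by simp only [q]; ring
  calc p * T / 2 * (vH * (1 - επ) - vL * (1 + επ) - 2 * εσ) = T / 2 * (a - b) := by ring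
    _ ≤ _ := le_sum_mul_sub_one_sub_mul hD (by nlinarith)

theorem alg_lower_bound_transaction_costs {Ω : Type*} [MeasureSpace Ω]
    [IsProbabilityMeasure (ℙ : Measure Ω)]
    (T : ℕ) (X : ℕ → Ω → ℝ)
    (hmeas : ∀ i, Measurable (X i))
    (hint : ∀ i, Integrable (X i))
    (hnonneg : ∀ i ω, 0 ≤ X i ω)
    (hindep : iIndepFun X ℙ)
    (hident : ∀ i ∈ Icc 1 T, Measure.map (X i) ℙ = Measure.map (X 1) ℙ)
    (επ εσ : ℝ) (hπ0 : 0 ≤ επ) (hπ1 : επ < 1) (hσ0 : 0 ≤ εσ) (hσ1 : εσ < 1)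
    (zL zH p vL vH : ℝ) (hz : zL ≤ zH)
    (hpL : p = (ℙ {ω | X 1 ω ≤ zL}).toReal)
    (hpH : p = (ℙ {ω | zH ≤ X 1 ω}).toReal)
    (hvLdef : p * vL = ∫ ω in {ω | X 1 ω ≤ zL}, X 1 ω)
    (hvHdef : p * vH = ∫ ω in {ω | zH ≤ X 1 ω}, X 1 ω) :
    p * T / 2 * (vH * (1 - επ) - vL * (1 + επ) - 2 * εσ) ≤
      ∫ ω, ∑ i ∈ Icc 1 T,
        (({ω' : Ω | holdBBSA zL zH (fun j => X j ω') (i - 1) = true ∧ zH ≤ X i ω'}.indicator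
            (fun ω' => (1 - επ) * X i ω' - εσ) ω) -
          {ω' : Ω | holdBBSA zL zH (fun j => X j ω') (i - 1) = false ∧ X i ω' ≤ zL}.indicator
            (fun ω' => (1 + επ) * X i ω' + εσ) ω) :=
  alg_lower_bound_transaction_costs_general T X hmeas hint hnonneg hindep hident επ εσ hπ0 hπ1 zL zH
    p vL vH hpL hpH hvLdef hvHdef
end

section
/- Let X₁, ..., X_T be independent integrable random variables with μᵢ = E[Xᵢ], X₀ = 0, μ_{T+1} = 0. Any online trading algorithm (a possibly randomized policy whose decision at step i depends only on X₁, ..., Xᵢ and the distributions, holding at most one unit, starting with one unit bought at price 0) has expected profit at most Σ_{i=1}^{T} E[max(μᵢ - X_{i-1}, 0)]. -/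
/-!
Let `h t ∈ [0, 1]` be the number of units held after step `t`, so that step `i` earns
`(h (i-1) - h i) X i`. Summing by parts, with `X 0 = 0` and `h T X T ≥ 0`, the total profit is at
most `∑ h (i-1) (X i - X (i-1))`. As `h (i-1)` is independent of `X i`, the `i`-th term has
expectation `E[h (i-1) (μ i - X (i-1))]`, and `0 ≤ h (i-1) ≤ 1` bounds its integrand by
`max (μ i - X (i-1)) 0`.
-/

open MeasureTheory ProbabilityTheory Finset

lemma sum_Icc_sub_mul_eq (h x : ℕ → ℝ) (hx0 : x 0 = 0) (T : ℕ) :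
    ∑ i ∈ Icc 1 T, (h (i - 1) - h i) * x i =
      ∑ i ∈ Icc 1 T, h (i - 1) * (x i - x (i - 1)) - h T * x T := by
  induction T with
  | zero => simp [hx0]
  | succ n ih =>
    rw [sum_Icc_succ_top (by omega), sum_Icc_succ_top (by omega), ih, Nat.add_sub_cancel]
    ring

lemma mul_le_max_zero {h a : ℝ} (h0 : 0 ≤ h) (h1 : h ≤ 1) : h * a ≤ max a 0 := by
  rcases le_total 0 a with ha | ha
  · nlinarith [le_max_left a 0]
  · nlinarith [le_max_right a 0]

lemma integral_mul_sub_le_integral_max_sub {Ω : Type*} [MeasurableSpace Ω] {P : Measure Ω}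
    [IsProbabilityMeasure P] {H Y Z : Ω → ℝ} (hH : AEStronglyMeasurable H P)
    (hH0 : ∀ ω, 0 ≤ H ω) (hH1 : ∀ ω, H ω ≤ 1) (hind : IndepFun H Y P)
    (hY : Integrable Y P) (hZ : Integrable Z P) :
    ∫ ω, H ω * (Y ω - Z ω) ∂P ≤ ∫ ω, max ((∫ ω', Y ω' ∂P) - Z ω) 0 ∂P := by
  have hbdd : ∀ᵐ ω ∂P, ‖H ω‖ ≤ 1 :=
    ae_of_all _ fun ω => abs_le.2 ⟨by linarith [hH0 ω], hH1 ω⟩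
  have hHint : Integrable H P := by simpa using (integrable_const (1 : ℝ)).bdd_mul hH hbdd
  have hmean : ∫ ω, H ω * Y ω ∂P = ∫ ω, H ω * (∫ ω', Y ω' ∂P) ∂P := by
    rw [integral_mul_const]
    exact hind.integral_mul_eq_mul_integral hH hY.aestronglyMeasurable
  calc ∫ ω, H ω * (Y ω - Z ω) ∂P = ∫ ω, H ω * ((∫ ω', Y ω' ∂P) - Z ω) ∂P := by
        simp only [mul_sub]
        rw [integral_sub (hY.bdd_mul hH hbdd) (hZ.bdd_mul hH hbdd),
          integral_sub (hHint.mul_const _) (hZ.bdd_mul hH hbdd), hmean]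
    _ ≤ _ :=
        integral_mono (((integrable_const _).sub hZ).bdd_mul hH hbdd)
          ((integrable_const _).sub hZ).pos_part fun ω => mul_le_max_zero (hH0 ω) (hH1 ω)

namespace OnlineTrading

variable {Ω : Type*} {B S : ℕ → Ω → Bool}

def netBuy (b s : Bool) : ℝ := (b.toNat : ℝ) - s.toNat

def holding (B S : ℕ → Ω → Bool) (t : ℕ) (ω : Ω) : ℝ :=
  ∑ j ∈ Icc 0 t, netBuy (B j ω) (S j ω)

lemma holding_succ (t : ℕ) (ω : Ω) :
    holding B S (t + 1) ω = holding B S t ω + netBuy (B (t + 1) ω) (S (t + 1) ω) :=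
  sum_Icc_succ_top (Nat.zero_le _) _

lemma holding_nonneg_and_le_one {t : ℕ} {ω : Ω}
    (h : (∑ j ∈ Icc 0 t, (S j ω).toNat) ≤ (∑ j ∈ Icc 0 t, (B j ω).toNat) ∧
      (∑ j ∈ Icc 0 t, (B j ω).toNat) ≤ (∑ j ∈ Icc 0 t, (S j ω).toNat) + 1) :
    0 ≤ holding B S t ω ∧ holding B S t ω ≤ 1 := by
  have hcast : holding B S t ω =
      ((∑ j ∈ Icc 0 t, (B j ω).toNat : ℕ) : ℝ) - ((∑ j ∈ Icc 0 t, (S j ω).toNat : ℕ) : ℝ) := by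
    simp [holding, netBuy, sum_sub_distrib]
  obtain ⟨hS, hB⟩ := h
  rw [hcast]
  constructor
  · exact sub_nonneg.2 (by exact_mod_cast hS)
  · exact sub_le_iff_le_add'.2 (by exact_mod_cast hB)

lemma sell_sub_buy_eq_holding_sub_mul {i : ℕ} (hi : 1 ≤ i) (ω : Ω) (x : ℝ) :
    ((if S i ω then x else 0) - if B i ω then x else 0) =
      (holding B S (i - 1) ω - holding B S i ω) * x := by
  obtain ⟨k, rfl⟩ := Nat.exists_eq_add_of_le' hi
  rw [holding_succ, Nat.add_sub_cancel]
  cases B (k + 1) ω <;> cases S (k + 1) ω <;> simp [netBuy]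

lemma holding_eq_comp (t : ℕ) :
    holding B S t = (fun v : Fin (t + 1) → Bool × Bool => ∑ j, netBuy (v j).1 (v j).2) ∘
      fun ω j => (B j ω, S j ω) := by
  funext ω
  simp [holding, ← Nat.range_succ_eq_Icc_zero, Fin.sum_univ_eq_sum_range
    (fun j => netBuy (B j ω) (S j ω))]

variable [MeasurableSpace Ω]

lemma measurable_holding (hB : ∀ j, Measurable (B j)) (hS : ∀ j, Measurable (S j)) (t : ℕ) :
    Measurable (holding B S t) :=
  Finset.measurable_sum _ fun j _ =>
    (measurable_of_countable fun p : Bool × Bool => netBuy p.1 p.2).comp ((hB j).prodMk (hS j))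

lemma indepFun_holding {P : Measure Ω} {Y : Ω → ℝ} {t : ℕ}
    (h : IndepFun (fun ω (j : Fin (t + 1)) => (B j ω, S j ω)) Y P) :
    IndepFun (holding B S t) Y P := by
  rw [holding_eq_comp]
  exact h.comp (measurable_of_countable _) measurable_id

end OnlineTrading

open OnlineTrading in
theorem online_alg_upper_bound_general {Ω : Type*} [MeasureSpace Ω]
    [IsProbabilityMeasure (ℙ : Measure Ω)]
    (T : ℕ) (X : ℕ → Ω → ℝ) (μ : ℕ → ℝ)
    (hX0 : ∀ ω, X 0 ω = 0)
    (hint : ∀ i, Integrable (X i))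
    (hnonneg : ∀ i ω, 0 ≤ X i ω)
    (hμ : ∀ i ∈ Icc 1 T, μ i = ∫ ω, X i ω)
    -- the online algorithm: buy/sell indicators, one action per day
    (B S : ℕ → Ω → Bool)
    (hmB : ∀ i, Measurable (B i)) (hmS : ∀ i, Measurable (S i))
    -- holding at most one unit, starting with one unit bought at time 0
    (hhold : ∀ ω, ∀ t ≤ T,
      (∑ j ∈ Icc 0 t, (S j ω).toNat) ≤ (∑ j ∈ Icc 0 t, (B j ω).toNat) ∧
      (∑ j ∈ Icc 0 t, (B j ω).toNat) ≤ (∑ j ∈ Icc 0 t, (S j ω).toNat) + 1)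
    -- the decisions up to time i - 1 depend only on X 1, ..., X (i-1)
    -- (and private randomness), hence are independent of X i
    (hadapted : ∀ i ∈ Icc 1 T,
      IndepFun (fun ω => fun j : Fin i => (B j ω, S j ω)) (X i) ℙ) :
    (∫ ω, ∑ i ∈ Icc 1 T,
        ((if S i ω then X i ω else 0) - if B i ω then X i ω else 0)) ≤
      ∑ i ∈ Icc 1 T, ∫ ω, max (μ i - X (i - 1) ω) 0 := by
  set H := holding B S
  have hH : ∀ t ≤ T, ∀ ω, 0 ≤ H t ω ∧ H t ω ≤ 1 := fun t ht ω =>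
    holding_nonneg_and_le_one (hhold ω t ht)
  have hHm : ∀ t, AEStronglyMeasurable (H t) ℙ := fun t =>
    (measurable_holding hmB hmS t).aestronglyMeasurable
  have htrade : ∀ i ∈ Icc 1 T, Integrable fun ω => (H (i - 1) ω - H i ω) * X i ω := by
    intro i hi
    refine (hint i).bdd_mul (c := 1) ((hHm _).sub (hHm i)) (ae_of_all _ fun ω => ?_)
    obtain ⟨a0, a1⟩ := hH (i - 1) (by grind) ω
    obtain ⟨b0, b1⟩ := hH i (by grind) ω
    exact abs_sub_le_of_nonneg_of_le a0 a1 b0 b1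
  have hgain : ∀ i ∈ Icc 1 T, Integrable fun ω => H (i - 1) ω * (X i ω - X (i - 1) ω) := by
    intro i hi
    refine ((hint i).sub (hint (i - 1))).bdd_mul (c := 1) (hHm _) (ae_of_all _ fun ω => ?_)
    obtain ⟨a0, a1⟩ := hH (i - 1) (by grind) ω
    exact abs_le.2 ⟨by linarith, a1⟩
  calc _ = ∫ ω, ∑ i ∈ Icc 1 T, (H (i - 1) ω - H i ω) * X i ω := by
        congr 1; funext ω
        exact sum_congr rfl fun i hi => sell_sub_buy_eq_holding_sub_mul (mem_Icc.1 hi).1 ω _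
    _ ≤ ∫ ω, ∑ i ∈ Icc 1 T, H (i - 1) ω * (X i ω - X (i - 1) ω) :=
        integral_mono (integrable_finsetSum _ htrade) (integrable_finsetSum _ hgain) fun ω => by
          rw [sum_Icc_sub_mul_eq (fun t => H t ω) (fun t => X t ω) (hX0 ω)]
          linarith [mul_nonneg (hH T le_rfl ω).1 (hnonneg T ω)]
    _ = ∑ i ∈ Icc 1 T, ∫ ω, H (i - 1) ω * (X i ω - X (i - 1) ω) := integral_finsetSum _ hgain
    _ ≤ _ := sum_le_sum fun i hi => by
        obtain ⟨k, rfl⟩ := Nat.exists_eq_add_of_le' (mem_Icc.1 hi).1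
        have hkT : k ≤ T := by grind
        rw [hμ _ hi, Nat.add_sub_cancel]
        exact integral_mul_sub_le_integral_max_sub (hHm k) (fun ω => (hH k hkT ω).1)
          (fun ω => (hH k hkT ω).2) (indepFun_holding (hadapted _ hi)) (hint _) (hint _)

theorem online_alg_upper_bound {Ω : Type*} [MeasureSpace Ω]
    [IsProbabilityMeasure (ℙ : Measure Ω)]
    (T : ℕ) (X : ℕ → Ω → ℝ) (μ : ℕ → ℝ)
    (hX0 : ∀ ω, X 0 ω = 0)
    (hmeas : ∀ i, Measurable (X i))
    (hint : ∀ i, Integrable (X i))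
    (hnonneg : ∀ i ω, 0 ≤ X i ω)
    (hindepX : iIndepFun X ℙ)
    (hμ : ∀ i ∈ Icc 1 T, μ i = ∫ ω, X i ω)
    -- the online algorithm: buy/sell indicators, one action per day
    (B S : ℕ → Ω → Bool)
    (hmB : ∀ i, Measurable (B i)) (hmS : ∀ i, Measurable (S i))
    (hB0 : ∀ ω, B 0 ω = true)  -- the initial unit is bought at time 0 at price X 0 = 0
    (hS0 : ∀ ω, S 0 ω = false)
    (hone : ∀ i ω, ¬(B i ω = true ∧ S i ω = true))
    -- holding at most one unit, starting with one unit bought at time 0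
    (hhold : ∀ ω, ∀ t ≤ T,
      (∑ j ∈ Icc 0 t, (S j ω).toNat) ≤ (∑ j ∈ Icc 0 t, (B j ω).toNat) ∧
      (∑ j ∈ Icc 0 t, (B j ω).toNat) ≤ (∑ j ∈ Icc 0 t, (S j ω).toNat) + 1)
    -- the decisions up to time i - 1 depend only on X 1, ..., X (i-1)
    -- (and private randomness), hence are independent of X i
    (hadapted : ∀ i ∈ Icc 1 T,
      IndepFun (fun ω => fun j : Fin i => (B j ω, S j ω)) (X i) ℙ) :
    (∫ ω, ∑ i ∈ Icc 1 T,
        ((if S i ω then X i ω else 0) - if B i ω then X i ω else 0)) ≤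
      ∑ i ∈ Icc 1 T, ∫ ω, max (μ i - X (i - 1) ω) 0 :=
  online_alg_upper_bound_general T X μ hX0 hint hnonneg hμ B S hmB hmS hhold hadapted
end
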